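/- Let g : ℝⁿ → ℝ be C¹ with σ-square-integrable gradient and Q ∈ ℝ^{n×n} orthogonal. Define g'(γ') = g(Qγ') and σ'(γ') = σ(Qγ'). Then C' = ∫ ∇g'(γ')∇g'(γ')ᵀ σ'(γ') dγ' equals Qᵀ C Q, where C = ∫ ∇g(γ)∇g(γ)ᵀ σ(γ) dγ. In particular C' and C have the same eigenvalues, and if u is an eigenvector of C then Qᵀu is an eigenvector of C' with the same eigenvalue. -/

import Mathlib

open Matrix MeasureTheory

/-!
An orthogonal matrix `Q` acts on Euclidean space as a linear isometry `e`, which preserves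
Lebesgue measure, and the chain rule gives `∇g'(γ') = Qᵀ ∇g(Qγ')`. Substituting `γ = Qγ'` in the
integral defining `C'` turns it into `∫ (Qᵀ∇g)(Qᵀ∇g)ᵀ σ = Qᵀ C Q`. Since `Qᵀ = Q⁻¹`, this is a
similarity, so it carries an eigenvector `u` of `C` to the eigenvector `Qᵀu` of `C'`.
-/

theorem HasGradientAt.comp_linearIsometryEquiv {E F : Type*}
    [NormedAddCommGroup E] [InnerProductSpace ℝ E] [CompleteSpace E]
    [NormedAddCommGroup F] [InnerProductSpace ℝ F] [CompleteSpace F]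
    {g : F → ℝ} {v : F} (e : E ≃ₗᵢ[ℝ] F) {x : E} (h : HasGradientAt g v (e x)) :
    HasGradientAt (g ∘ e) (e.symm v) x := by
  have hdual : (InnerProductSpace.toDual ℝ F v).comp (e : E →L[ℝ] F) =
      InnerProductSpace.toDual ℝ E (e.symm v) := by
    ext y
    simp [← e.inner_map_map (e.symm v)]
  rw [hasGradientAt_iff_hasFDerivAt, ← hdual]
  exact h.hasFDerivAt.comp x e.toContinuousLinearEquiv.hasFDerivAt

namespace Matrix

variable {n : Type*} [Fintype n] [DecidableEq n]

noncomputable def toEuclideanLinearIsometryEquiv (Q : unitaryGroup n ℝ) :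
    EuclideanSpace ℝ n ≃ₗᵢ[ℝ] EuclideanSpace ℝ n :=
  Unitary.linearIsometryEquiv
    ⟨toEuclideanCLM (n := n) (𝕜 := ℝ) Q, Unitary.map_mem (toEuclideanCLM (n := n) (𝕜 := ℝ)) Q.2⟩

@[simp]
lemma toEuclideanLinearIsometryEquiv_apply (Q : unitaryGroup n ℝ) (x : EuclideanSpace ℝ n) :
    toEuclideanLinearIsometryEquiv Q x = WithLp.toLp 2 ((Q : Matrix n n ℝ) *ᵥ x) := rfl

@[simp]
lemma toEuclideanLinearIsometryEquiv_symm_apply (Q : unitaryGroup n ℝ) (x : EuclideanSpace ℝ n) :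
    (toEuclideanLinearIsometryEquiv Q).symm x = WithLp.toLp 2 ((Q : Matrix n n ℝ)ᵀ *ᵥ x) := by
  rw [LinearIsometryEquiv.symm_apply_eq, toEuclideanLinearIsometryEquiv_apply, mulVec_mulVec,
    ← conjTranspose_eq_transpose_of_trivial, ← star_eq_conjTranspose, Q.2.2, one_mulVec]

end Matrix

section OuterProductIntegral

variable {α : Type*} [MeasurableSpace α] {m n : Type*} [Fintype n]

noncomputable def outerProductIntegral (μ : Measure α) (G : α → n → ℝ) (w : α → ℝ) :
    Matrix n n ℝ :=
  Matrix.of fun i j => ∫ x, G x i * G x j * w x ∂μ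

theorem outerProductIntegral_mulVec {μ : Measure α} {G : α → n → ℝ} {w : α → ℝ}
    (hG : ∀ i j, Integrable (fun x => G x i * G x j * w x) μ) (A : Matrix m n ℝ) :
    outerProductIntegral μ (fun x => A *ᵥ G x) w = A * outerProductIntegral μ G w * Aᵀ := by
  ext i j
  have hexpand : ∀ x, (A *ᵥ G x) i * (A *ᵥ G x) j * w x =
      ∑ k, ∑ l, A i k * A j l * (G x k * G x l * w x) := by
    intro x
    simp only [mulVec, dotProduct]
    rw [Finset.sum_mul_sum]
    simp only [Finset.sum_mul]
    exact Finset.sum_congr rfl fun k _ => Finset.sum_congr rfl fun l _ => by ring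
  simp only [outerProductIntegral, of_apply, hexpand, mul_apply, transpose_apply, Finset.sum_mul]
  rw [integral_finsetSum _ fun k _ => integrable_finsetSum _ fun l _ => (hG k l).const_mul _]
  rw [Finset.sum_comm]
  refine Finset.sum_congr rfl fun k _ => ?_
  rw [integral_finsetSum _ fun l _ => (hG k l).const_mul _]
  refine Finset.sum_congr rfl fun l _ => ?_
  rw [integral_const_mul]
  ring

end OuterProductIntegral

theorem outerProductIntegral_comp_linearIsometryEquiv {E F n : Type*} [Fintype n]
    [NormedAddCommGroup E] [InnerProductSpace ℝ E] [FiniteDimensional ℝ E]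
    [MeasurableSpace E] [BorelSpace E]
    [NormedAddCommGroup F] [InnerProductSpace ℝ F] [FiniteDimensional ℝ F]
    [MeasurableSpace F] [BorelSpace F]
    (e : E ≃ₗᵢ[ℝ] F) (G : F → n → ℝ) (w : F → ℝ) :
    outerProductIntegral volume (G ∘ e) (w ∘ e) = outerProductIntegral volume G w := by
  ext i j
  exact integral_comp e fun y => G y i * G y j * w y

namespace Matrix

variable {R n : Type*} [CommRing R] [Fintype n] [DecidableEq n]

theorem transpose_mul_mul_mulVec_eq_smul {C Q : Matrix n n R} (hQ : Q * Qᵀ = 1) {μ : R}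
    {u : n → R} (hu : C *ᵥ u = μ • u) : (Qᵀ * C * Q) *ᵥ (Qᵀ *ᵥ u) = μ • (Qᵀ *ᵥ u) := by
  rw [← mulVec_mulVec, ← mulVec_mulVec, mulVec_mulVec u Q, hQ, one_mulVec, hu, mulVec_smul]

theorem exists_eigenvector_transpose_mul_mul {C Q : Matrix n n R} (hQ : Q * Qᵀ = 1) {μ : R}
    (h : ∃ u, u ≠ 0 ∧ C *ᵥ u = μ • u) : ∃ u, u ≠ 0 ∧ (Qᵀ * C * Q) *ᵥ u = μ • u := by
  obtain ⟨u, hu0, hu⟩ := h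
  refine ⟨Qᵀ *ᵥ u, fun h0 => hu0 ?_, transpose_mul_mul_mulVec_eq_smul hQ hu⟩
  rw [← one_mulVec u, ← hQ, ← mulVec_mulVec, h0, mulVec_zero]

theorem exists_eigenvector_transpose_mul_mul_iff {C Q : Matrix n n R} (hQ : Qᵀ * Q = 1) (μ : R) :
    (∃ u, u ≠ 0 ∧ C *ᵥ u = μ • u) ↔ ∃ u, u ≠ 0 ∧ (Qᵀ * C * Q) *ᵥ u = μ • u := by
  have hQ' : Q * Qᵀ = 1 := mul_eq_one_comm.mp hQ
  refine ⟨exists_eigenvector_transpose_mul_mul hQ', fun h => ?_⟩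
  have hconj : Qᵀᵀ * (Qᵀ * C * Q) * Qᵀ = C := by
    rw [transpose_transpose, ← Matrix.mul_assoc, ← Matrix.mul_assoc, hQ', Matrix.one_mul,
      Matrix.mul_assoc, hQ', Matrix.mul_one]
  simpa only [hconj] using
    exists_eigenvector_transpose_mul_mul (Q := Qᵀ) (by rwa [transpose_transpose]) h

end Matrix

theorem stmt14_general (n : ℕ)
    (g : EuclideanSpace ℝ (Fin n) → ℝ)
    (Gg : EuclideanSpace ℝ (Fin n) → EuclideanSpace ℝ (Fin n))
    (hGg : ∀ γ, HasGradientAt g (Gg γ) γ)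
    (σ : EuclideanSpace ℝ (Fin n) → ℝ)
    (Q : Matrix (Fin n) (Fin n) ℝ) (hQ : Qᵀ * Q = 1)
    (g' : EuclideanSpace ℝ (Fin n) → ℝ)
    (hg' : ∀ γ' : EuclideanSpace ℝ (Fin n), g' γ' = g (WithLp.toLp 2 (Q *ᵥ γ' : Fin n → ℝ)))
    (Gg' : EuclideanSpace ℝ (Fin n) → EuclideanSpace ℝ (Fin n))
    (hGg' : ∀ γ', HasGradientAt g' (Gg' γ') γ')
    (C : Matrix (Fin n) (Fin n) ℝ)
    (hC : ∀ i j, C i j = ∫ γ, Gg γ i * Gg γ j * σ γ)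
    (hIntC : ∀ i j, Integrable (fun γ => Gg γ i * Gg γ j * σ γ))
    (C' : Matrix (Fin n) (Fin n) ℝ)
    (hC' : ∀ i j, C' i j = ∫ γ' : EuclideanSpace ℝ (Fin n),
      Gg' γ' i * Gg' γ' j * σ (WithLp.toLp 2 (Q *ᵥ γ' : Fin n → ℝ))) :
    C' = Qᵀ * C * Q ∧
    (∀ (μ : ℝ) (u : Fin n → ℝ), C *ᵥ u = μ • u →
      C' *ᵥ (Qᵀ *ᵥ u) = μ • (Qᵀ *ᵥ u)) ∧
    (∀ μ : ℝ, (∃ u : Fin n → ℝ, u ≠ 0 ∧ C *ᵥ u = μ • u)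
      ↔ ∃ u : Fin n → ℝ, u ≠ 0 ∧ C' *ᵥ u = μ • u) := by
  have hQ_mem : Q ∈ unitaryGroup (Fin n) ℝ := by
    rw [mem_unitaryGroup_iff', star_eq_conjTranspose, conjTranspose_eq_transpose_of_trivial, hQ]
  set e := toEuclideanLinearIsometryEquiv ⟨Q, hQ_mem⟩
  have hGg'_eq : ∀ γ', Gg' γ' = e.symm (Gg (e γ')) := by
    intro γ'
    have hg'_eq : g ∘ e = g' := funext fun γ' => (hg' γ').symm
    exact (hGg' γ').unique (hg'_eq ▸ (hGg (e γ')).comp_linearIsometryEquiv e)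
  have hCC : C' = Qᵀ * C * Q := calc
    C' = outerProductIntegral volume ((fun γ => Qᵀ *ᵥ Gg γ) ∘ e) (σ ∘ e) := by
      ext i j
      simp [hC', outerProductIntegral, hGg'_eq, e]
    _ = outerProductIntegral volume (fun γ => Qᵀ *ᵥ Gg γ) σ :=
      outerProductIntegral_comp_linearIsometryEquiv e _ σ
    _ = Qᵀ * C * Q := by
      rw [outerProductIntegral_mulVec hIntC, transpose_transpose]
      congr
      ext i j
      exact (hC i j).symm
  subst hCC
  exact ⟨rfl, fun μ u => transpose_mul_mul_mulVec_eq_smul (mul_eq_one_comm.mp hQ),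
    exists_eigenvector_transpose_mul_mul_iff hQ⟩

/-- Under an orthogonal change of variables γ = Qγ', with
g'(γ') = g(Qγ') and σ'(γ') = σ(Qγ'), the gradient outer-product matrix transforms as
C' = Qᵀ C Q; in particular C' and C have the same eigenvalues, and if u is an
eigenvector of C then Qᵀu is an eigenvector of C' with the same eigenvalue. -/
theorem stmt14 (n : ℕ)
    (g : EuclideanSpace ℝ (Fin n) → ℝ) (hg : ContDiff ℝ 1 g)
    (Gg : EuclideanSpace ℝ (Fin n) → EuclideanSpace ℝ (Fin n))
    (hGg : ∀ γ, HasGradientAt g (Gg γ) γ)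
    (σ : EuclideanSpace ℝ (Fin n) → ℝ)
    (hσ0 : ∀ γ, 0 ≤ σ γ) (hσ1 : ∫ γ, σ γ = 1)
    (Q : Matrix (Fin n) (Fin n) ℝ) (hQ : Qᵀ * Q = 1) (hdet : Q.det = 1)
    (g' : EuclideanSpace ℝ (Fin n) → ℝ)
    (hg' : ∀ γ' : EuclideanSpace ℝ (Fin n), g' γ' = g (WithLp.toLp 2 (Q *ᵥ γ' : Fin n → ℝ)))
    (Gg' : EuclideanSpace ℝ (Fin n) → EuclideanSpace ℝ (Fin n))
    (hGg' : ∀ γ', HasGradientAt g' (Gg' γ') γ')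
    (C : Matrix (Fin n) (Fin n) ℝ)
    (hC : ∀ i j, C i j = ∫ γ, Gg γ i * Gg γ j * σ γ)
    (hIntC : ∀ i j, Integrable (fun γ => Gg γ i * Gg γ j * σ γ))
    (C' : Matrix (Fin n) (Fin n) ℝ)
    (hC' : ∀ i j, C' i j = ∫ γ' : EuclideanSpace ℝ (Fin n),
      Gg' γ' i * Gg' γ' j * σ (WithLp.toLp 2 (Q *ᵥ γ' : Fin n → ℝ)))
    (hIntC' : ∀ i j, Integrable (fun γ' : EuclideanSpace ℝ (Fin n) =>
      Gg' γ' i * Gg' γ' j * σ (WithLp.toLp 2 (Q *ᵥ γ' : Fin n → ℝ)))) :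
    C' = Qᵀ * C * Q ∧
    (∀ (μ : ℝ) (u : Fin n → ℝ), C *ᵥ u = μ • u →
      C' *ᵥ (Qᵀ *ᵥ u) = μ • (Qᵀ *ᵥ u)) ∧
    (∀ μ : ℝ, (∃ u : Fin n → ℝ, u ≠ 0 ∧ C *ᵥ u = μ • u)
      ↔ ∃ u : Fin n → ℝ, u ≠ 0 ∧ C' *ᵥ u = μ • u) :=
  stmt14_general n g Gg hGg σ Q hQ g' hg' Gg' hGg' C hC hIntC C' hC'
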